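/- arXiv:2209.03259 — 2 statements merged into one kernel-verified Lean document; each statement's English description precedes it below -/
import Mathlib

section
/- For every subset I₃ of {1,…,n}³, the sum ∑_{(i,j,l)∈I₃} (P^γ_{ij})² (P^γ_{jl})² is at most r, where r = rank(Z). -/
/-!
Write `B = ZᵀZ + γI` and `P = Z B⁻¹ Zᵀ`. Substituting `ZᵀZ = B - γI` in `P² = Z B⁻¹ (ZᵀZ) B⁻¹ Zᵀ`
gives `P - P² = γ (Z B⁻¹)(Z B⁻¹)ᵀ ⪰ 0`, so the eigenvalues of `P` lie in `[0, 1]`. Hence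
`w j := (P²)ⱼⱼ = ∑ₗ Pⱼₗ²` satisfies `Pⱼⱼ² ≤ w j ≤ Pⱼⱼ`, so `0 ≤ w j ≤ 1`, and
`tr P ≤ rank P ≤ rank Z`. By symmetry of `P` the full triple sum is `∑ⱼ (w j)²`, and
`∑ⱼ (w j)² ≤ ∑ⱼ w j ≤ tr P ≤ rank Z`.
-/

open Matrix Finset

/-- The ridge-regularised projection matrix `P^γ = Z (ZᵀZ + γ I)⁻¹ Zᵀ`. -/
noncomputable def ridgeP {n k : ℕ} (Z : Matrix (Fin n) (Fin k) ℝ) (γ : ℝ) :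
    Matrix (Fin n) (Fin n) ℝ :=
  Z * (Zᵀ * Z + γ • (1 : Matrix (Fin k) (Fin k) ℝ))⁻¹ * Zᵀ

open scoped ComplexOrder

namespace Matrix

variable {m n : Type*} [Fintype n]

theorem mulVec_injective_of_rank_eq_card {K : Type*} [Field K] {A : Matrix m n K}
    (hA : A.rank = Fintype.card n) : Function.Injective A.mulVec := by
  have hker : Module.finrank K (LinearMap.ker A.mulVecLin) = 0 := by
    have := A.mulVecLin.finrank_range_add_finrank_ker
    rw [Module.finrank_fintype_fun_eq_card, ← rank, hA] at this
    omega
  rwa [Submodule.finrank_eq_zero, LinearMap.ker_eq_bot] at hker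

theorem IsHermitian.mul_self_apply_eq_sum_sq {A : Matrix n n ℝ} (hA : A.IsHermitian) (j : n) :
    (A * A) j j = ∑ l, A j l ^ 2 := by
  rw [mul_apply]
  refine sum_congr rfl fun l _ => ?_
  rw [← hA.apply j l, star_trivial, sq]

theorem IsHermitian.sum_sq_mul_sq_eq {A : Matrix n n ℝ} (hA : A.IsHermitian) :
    ∑ t : n × n × n, A t.1 t.2.1 ^ 2 * A t.2.1 t.2.2 ^ 2 = ∑ j, (A * A) j j ^ 2 := by
  simp only [Fintype.sum_prod_type, ← mul_sum]
  rw [sum_comm]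
  refine sum_congr rfl fun j _ => ?_
  rw [← sum_mul, hA.mul_self_apply_eq_sum_sq, sq]
  congr 1
  refine sum_congr rfl fun i _ => ?_
  rw [← hA.apply j i, star_trivial]

theorem PosSemidef.mul_self_apply_le_apply {A : Matrix n n ℝ} (hAA : (A - A * A).PosSemidef)
    (j : n) : (A * A) j j ≤ A j j := by
  simpa using hAA.diag_nonneg (i := j)

theorem IsHermitian.mul_self_apply_le_one {A : Matrix n n ℝ} (hA : A.IsHermitian)
    (hAA : (A - A * A).PosSemidef) (j : n) : (A * A) j j ≤ 1 := by
  have hdiag : A j j ^ 2 ≤ (A * A) j j := by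
    rw [hA.mul_self_apply_eq_sum_sq]
    exact single_le_sum (f := fun l => A j l ^ 2) (fun l _ => sq_nonneg _) (mem_univ j)
  nlinarith [hAA.mul_self_apply_le_apply j]

variable [DecidableEq n]

theorem IsHermitian.eigenvalues_sq_le_self {𝕜 : Type*} [RCLike 𝕜] {A : Matrix n n 𝕜}
    (hA : A.IsHermitian) (hAA : (A - A * A).PosSemidef) (i : n) :
    hA.eigenvalues i ^ 2 ≤ hA.eigenvalues i := by
  have hquad := hAA.re_dotProduct_nonneg (hA.eigenvectorBasis i)
  rw [sub_mulVec, dotProduct_sub, map_sub, ← hA.eigenvalues_eq, ← mulVec_mulVec,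
    hA.mulVec_eigenvectorBasis, mulVec_smul, dotProduct_smul, RCLike.smul_re,
    ← hA.eigenvalues_eq] at hquad
  nlinarith

theorem IsHermitian.trace_le_rank {A : Matrix n n ℝ} (hA : A.IsHermitian)
    (hAA : (A - A * A).PosSemidef) : A.trace ≤ A.rank := by
  rw [hA.trace_eq_sum_eigenvalues, hA.rank_eq_card_non_zero_eigs, Fintype.card_subtype,
    ← sum_boole]
  refine sum_le_sum fun i _ => ?_
  have hsq := hA.eigenvalues_sq_le_self hAA i
  rcases eq_or_ne (hA.eigenvalues i) 0 with h | h
  · simp [h]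
  · rw [if_pos h, RCLike.ofReal_real_eq_id, id]
    nlinarith [sq_pos_of_ne_zero h]

theorem IsHermitian.sum_sq_mul_sq_le_rank {A : Matrix n n ℝ} (hA : A.IsHermitian)
    (hAA : (A - A * A).PosSemidef) (s : Finset (n × n × n)) :
    ∑ t ∈ s, A t.1 t.2.1 ^ 2 * A t.2.1 t.2.2 ^ 2 ≤ A.rank :=
  calc ∑ t ∈ s, A t.1 t.2.1 ^ 2 * A t.2.1 t.2.2 ^ 2
      ≤ ∑ t : n × n × n, A t.1 t.2.1 ^ 2 * A t.2.1 t.2.2 ^ 2 :=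
        sum_le_sum_of_subset_of_nonneg (subset_univ s) fun _ _ _ => by positivity
    _ = ∑ j, (A * A) j j ^ 2 := hA.sum_sq_mul_sq_eq
    _ ≤ ∑ j, A j j := sum_le_sum fun j _ => by
        have hnonneg : 0 ≤ (A * A) j j := by
          rw [hA.mul_self_apply_eq_sum_sq]; positivity
        nlinarith [hA.mul_self_apply_le_one hAA j, hAA.mul_self_apply_le_apply j]
    _ ≤ A.rank := hA.trace_le_rank hAA

theorem posDef_transpose_mul_self_add_smul_one [Fintype m] (A : Matrix m n ℝ) {γ : ℝ}
    (hγ : 0 ≤ γ) (hγpos : A.rank < Fintype.card n → 0 < γ) : (Aᵀ * A + γ • 1).PosDef := by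
  rcases hγ.lt_or_eq with hγ | rfl
  · exact PosDef.posSemidef_add (posSemidef_conjTranspose_mul_self A) (PosDef.one.smul hγ)
  · have hrank : A.rank = Fintype.card n :=
      A.rank_le_card_width.antisymm (not_lt.1 fun h => (hγpos h).false)
    simpa using PosDef.conjTranspose_mul_self A (mulVec_injective_of_rank_eq_card hrank)

end Matrix

section Ridge

variable {n k : ℕ} (Z : Matrix (Fin n) (Fin k) ℝ) (γ : ℝ)

theorem ridgeP_isHermitian : (ridgeP Z γ).IsHermitian := by
  have hB : (Zᵀ * Z + γ • (1 : Matrix (Fin k) (Fin k) ℝ))ᵀ = Zᵀ * Z + γ • 1 := by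
    simp [transpose_add, transpose_mul]
  rw [IsHermitian, conjTranspose_eq_transpose_of_trivial, ridgeP, transpose_mul, transpose_mul,
    transpose_transpose, transpose_nonsing_inv, hB, Matrix.mul_assoc]

theorem rank_ridgeP_le : (ridgeP Z γ).rank ≤ Z.rank :=
  (rank_mul_le_left _ _).trans (rank_mul_le_left _ _)

theorem ridgeP_sub_mul_self (hB : IsUnit (Zᵀ * Z + γ • (1 : Matrix (Fin k) (Fin k) ℝ)).det) :
    ridgeP Z γ - ridgeP Z γ * ridgeP Z γ =
      γ • ((Z * (Zᵀ * Z + γ • 1)⁻¹) * (Z * (Zᵀ * Z + γ • 1)⁻¹)ᵀ) := by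
  set B := Zᵀ * Z + γ • (1 : Matrix (Fin k) (Fin k) ℝ)
  have hBt : Bᵀ = B := by simp [B, transpose_add, transpose_mul]
  have hZZ : Zᵀ * Z = B - γ • 1 := by simp [B]
  calc ridgeP Z γ - ridgeP Z γ * ridgeP Z γ
      = Z * B⁻¹ * Zᵀ - Z * B⁻¹ * (Zᵀ * Z) * B⁻¹ * Zᵀ := by
        simp only [ridgeP, B, Matrix.mul_assoc]
    _ = γ • ((Z * B⁻¹) * (Z * B⁻¹)ᵀ) := by
      rw [hZZ, transpose_mul, transpose_nonsing_inv, hBt]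
      simp only [Matrix.mul_sub, Matrix.sub_mul, nonsing_inv_mul B hB, Matrix.mul_smul,
        Matrix.smul_mul, Matrix.mul_one, Matrix.mul_assoc, sub_sub_cancel]

theorem posSemidef_ridgeP_sub_mul_self (hγ0 : 0 ≤ γ) (hγpos : Z.rank < k → 0 < γ) :
    (ridgeP Z γ - ridgeP Z γ * ridgeP Z γ).PosSemidef := by
  have hB := posDef_transpose_mul_self_add_smul_one Z hγ0 (by rwa [Fintype.card_fin])
  rw [ridgeP_sub_mul_self Z γ (isUnit_iff_ne_zero.2 hB.det_pos.ne')]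
  have := (posSemidef_self_mul_conjTranspose (Z * (Zᵀ * Z + γ • 1)⁻¹)).smul hγ0
  rwa [conjTranspose_eq_transpose_of_trivial] at this

end Ridge

theorem ridgeP_triple_sum_le_rank_general
    {n k : ℕ}
    (Z : Matrix (Fin n) (Fin k) ℝ)
    (γ : ℝ) (hγ0 : 0 ≤ γ) (hγpos : Z.rank < k → 0 < γ)
    (I₃ : Finset (Fin n × Fin n × Fin n)) :
    ∑ t ∈ I₃, (ridgeP Z γ t.1 t.2.1) ^ 2 * (ridgeP Z γ t.2.1 t.2.2) ^ 2 ≤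
      (Z.rank : ℝ) :=
  calc ∑ t ∈ I₃, (ridgeP Z γ t.1 t.2.1) ^ 2 * (ridgeP Z γ t.2.1 t.2.2) ^ 2
      ≤ (ridgeP Z γ).rank := (ridgeP_isHermitian Z γ).sum_sq_mul_sq_le_rank
        (posSemidef_ridgeP_sub_mul_self Z γ hγ0 hγpos) I₃
    _ ≤ Z.rank := by exact_mod_cast rank_ridgeP_le Z γ

/-- For every subset `I₃` of `{1,…,n}³`,
`∑_{(i,j,l) ∈ I₃} (P^γ_{ij})² (P^γ_{jl})² ≤ rank(Z)`. -/
theorem ridgeP_triple_sum_le_rank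
    {n k : ℕ} (hn : 0 < n) (hk : 0 < k)
    (Z : Matrix (Fin n) (Fin k) ℝ) (hr : 0 < Z.rank)
    (γ : ℝ) (hγ0 : 0 ≤ γ) (hγpos : Z.rank < k → 0 < γ)
    (I₃ : Finset (Fin n × Fin n × Fin n)) :
    ∑ t ∈ I₃, (ridgeP Z γ t.1 t.2.1) ^ 2 * (ridgeP Z γ t.2.1 t.2.2) ^ 2 ≤
      (Z.rank : ℝ) :=
  ridgeP_triple_sum_le_rank_general Z γ hγ0 hγpos I₃
end

section
/- Let γ₋ > 0 and let Γ := [0,∞) if rank(Z) = k and Γ := [γ₋,∞) if rank(Z) < k. If there exists γ ∈ Γ for which P^γ is not a diagonal matrix (equivalently, ∑_{i=1}^n ∑_{j≠i} (P^γ_{ij})² > 0), then the function f(γ) := ∑_{i=1}^n ∑_{j≠i} (P^γ_{ij})² attains its maximum on Γ, and the set of maximisers has a largest element γ* ∈ [0,∞). -/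
/-!
On `Γ = [a, ∞)` the matrix `ZᵀZ + γI` is positive definite (at `γ = 0` because full column rank
makes `Z` injective), so `f` is continuous on `Γ`. Writing `(A + γI)⁻¹ = γ⁻¹ (γ⁻¹A + I)⁻¹` shows
`(ZᵀZ + γI)⁻¹ → 0`, hence `f → 0` as `γ → ∞`. A continuous function on `[a, ∞)` that tends to
`0` and is positive somewhere is below that positive value outside a compact window, so it
attains its maximum, and its set of maximisers is closed and bounded above, so it contains its
supremum.
-/

open Matrix Finset

open Filter Topology

theorem exists_isGreatest_isMaxOn_Ici {f : ℝ → ℝ} {a c x₀ : ℝ}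
    (hf : ContinuousOn f (Set.Ici a)) (hlim : Tendsto f atTop (𝓝 c)) (hx₀ : a ≤ x₀)
    (hc : c < f x₀) :
    ∃ x, IsGreatest {y | y ∈ Set.Ici a ∧ IsMaxOn f (Set.Ici a) y} x := by
  obtain ⟨b, hb⟩ := eventually_atTop.mp (hlim.eventually (gt_mem_nhds hc))
  have hsmall : ∀ x, b ≤ x → f x < f x₀ := hb
  obtain ⟨m, hm, hmax⟩ : ∃ m ∈ Set.Ici a, IsMaxOn f (Set.Ici a) m := by
    refine hf.exists_isMaxOn' isClosed_Ici hx₀ ?_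
    refine (hasBasis_cocompact.inf_principal _).eventually_iff.2
      ⟨Set.Icc a b, isCompact_Icc, fun x ⟨hxK, hxa⟩ => (hsmall x ?_).le⟩
    by_contra! hxb
    exact hxK ⟨hxa, hxb.le⟩
  set S := {y | y ∈ Set.Ici a ∧ IsMaxOn f (Set.Ici a) y}
  have hS : S = Set.Ici a ∩ f ⁻¹' Set.Ici (f m) := by
    ext y
    exact and_congr_right fun _ =>
      ⟨fun h => h hm, fun h z hz => show f z ≤ f y from (hmax hz).trans h⟩
  have hclosed : IsClosed S := hS ▸ hf.preimage_isClosed_of_isClosed isClosed_Ici isClosed_Ici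
  have hbdd : BddAbove S := ⟨b, fun y ⟨_, hy⟩ => by
    by_contra! hby
    exact (hsmall y hby.le).not_ge (hy hx₀)⟩
  exact ⟨sSup S, hclosed.csSup_mem ⟨m, hm, hmax⟩ hbdd, fun y hy => le_csSup hbdd hy⟩

section InverseAddSmulOne

variable {ι : Type*} [Fintype ι] [DecidableEq ι]

theorem continuousAt_inv_add_smul_one (A : Matrix ι ι ℝ) {γ : ℝ}
    (hγ : IsUnit (A + γ • (1 : Matrix ι ι ℝ)).det) :
    ContinuousAt (fun t : ℝ => (A + t • (1 : Matrix ι ι ℝ))⁻¹) γ := by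
  refine (continuousAt_matrix_inv _ ?_).comp (f := fun t : ℝ => A + t • (1 : Matrix ι ι ℝ))
    (by fun_prop)
  rw [Ring.inverse_eq_inv']
  exact continuousAt_inv₀ hγ.ne_zero

theorem tendsto_inv_add_smul_one_atTop (A : Matrix ι ι ℝ) :
    Tendsto (fun γ : ℝ => (A + γ • (1 : Matrix ι ι ℝ))⁻¹) atTop (𝓝 0) := by
  have hcont : Continuous fun t : ℝ => t • A + 1 := by fun_prop
  have hunit : ∀ᶠ t in 𝓝 (0 : ℝ), IsUnit (t • A + 1).det := by
    have h := hcont.matrix_det.continuousAt (x := 0)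
    filter_upwards [h.eventually_ne (y := 0) (by simp)] with t ht using ht.isUnit
  have hlim : Tendsto (fun t : ℝ => t • (t • A + 1)⁻¹) (𝓝 0) (𝓝 0) := by
    have hinv : ContinuousAt (fun t : ℝ => (t • A + 1)⁻¹) 0 := by
      refine (continuousAt_matrix_inv _ ?_).comp hcont.continuousAt
      rw [Ring.inverse_eq_inv']
      exact continuousAt_inv₀ (by simp)
    simpa using tendsto_id.smul hinv.tendsto
  have hrescale :
      ∀ᶠ γ : ℝ in atTop, (A + γ • (1 : Matrix ι ι ℝ))⁻¹ = γ⁻¹ • (γ⁻¹ • A + 1)⁻¹ := by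
    filter_upwards [eventually_gt_atTop 0,
      tendsto_inv_atTop_zero.eventually hunit] with γ hγ hdet
    have hfactor : A + γ • (1 : Matrix ι ι ℝ) = γ • (γ⁻¹ • A + 1) := by
      rw [smul_add, smul_inv_smul₀ hγ.ne']
    refine Matrix.inv_eq_left_inv ?_
    rw [hfactor, smul_mul_smul_comm, inv_mul_cancel₀ hγ.ne', one_smul, nonsing_inv_mul _ hdet]
  exact (hlim.comp tendsto_inv_atTop_zero).congr' (hrescale.mono fun _ h => h.symm)

end InverseAddSmulOne

theorem Matrix.mulVec_injective_of_rank_eq_card_s10 {m n K : Type*} [Fintype n] [Field K]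
    {A : Matrix m n K} (h : A.rank = Fintype.card n) : Function.Injective A.mulVec := by
  have hker : Module.finrank K (LinearMap.ker A.mulVecLin) = 0 := by
    have := A.mulVecLin.finrank_range_add_finrank_ker
    rw [Module.finrank_fintype_fun_eq_card, ← Matrix.rank, h] at this
    omega
  exact LinearMap.ker_eq_bot.mp (Submodule.finrank_eq_zero.mp hker)

section Gram

variable {m ι : Type*} [Fintype m] [Fintype ι] [DecidableEq ι] (Z : Matrix m ι ℝ) {γ : ℝ}

theorem posDef_transpose_mul_self_add_smul_one (hγ : 0 < γ) :
    (Zᵀ * Z + γ • (1 : Matrix ι ι ℝ)).PosDef :=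
  PosDef.posSemidef_add (Z.conjTranspose_eq_transpose_of_trivial ▸
    posSemidef_conjTranspose_mul_self Z) (PosDef.one.smul hγ)

theorem posDef_transpose_mul_self_add_smul_one_of_injective (hZ : Function.Injective Z.mulVec)
    (hγ : 0 ≤ γ) : (Zᵀ * Z + γ • (1 : Matrix ι ι ℝ)).PosDef :=
  PosDef.add_posSemidef (Z.conjTranspose_eq_transpose_of_trivial ▸
    PosDef.conjTranspose_mul_self Z hZ) (PosSemidef.one.smul hγ)

end Gram

section OffDiagonal

variable {ι : Type*} [Fintype ι] [DecidableEq ι]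

def offDiagSqSum (M : Matrix ι ι ℝ) : ℝ :=
  ∑ i, ∑ j ∈ univ.erase i, M i j ^ 2

theorem continuous_offDiagSqSum : Continuous (offDiagSqSum : Matrix ι ι ℝ → ℝ) := by
  unfold offDiagSqSum
  fun_prop

@[simp]
theorem offDiagSqSum_zero : offDiagSqSum (0 : Matrix ι ι ℝ) = 0 := by
  simp [offDiagSqSum]

end OffDiagonal

theorem continuous_mul_mul_transpose {m n : Type*} [Fintype n] (Z : Matrix m n ℝ) :
    Continuous fun M : Matrix n n ℝ => Z * M * Zᵀ :=
  (continuous_const.matrix_mul continuous_id).matrix_mul continuous_const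

section RidgeProjection

variable {n k : ℕ} (Z : Matrix (Fin n) (Fin k) ℝ)

theorem continuousAt_ridgeP {γ : ℝ}
    (hγ : IsUnit (Zᵀ * Z + γ • (1 : Matrix (Fin k) (Fin k) ℝ)).det) :
    ContinuousAt (ridgeP Z) γ :=
  (continuous_mul_mul_transpose Z).continuousAt.comp (continuousAt_inv_add_smul_one _ hγ)

theorem tendsto_ridgeP_atTop : Tendsto (ridgeP Z) atTop (𝓝 0) := by
  have h := ((continuous_mul_mul_transpose Z).tendsto 0).comp
    (tendsto_inv_add_smul_one_atTop (Zᵀ * Z))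
  rwa [Matrix.mul_zero, Matrix.zero_mul] at h

end RidgeProjection

theorem gammaStar_exists_general
    {n k : ℕ}
    (Z : Matrix (Fin n) (Fin k) ℝ)
    (γm : ℝ) (hγm : 0 < γm)
    (Γ : Set ℝ)
    (hΓ : Γ = if Z.rank = k then Set.Ici (0 : ℝ) else Set.Ici γm)
    (f : ℝ → ℝ)
    (hf : ∀ γ, f γ = ∑ i : Fin n, ∑ j ∈ Finset.univ.erase i, (ridgeP Z γ i j) ^ 2)
    (hnd : ∃ γ ∈ Γ, 0 < f γ) :
    ∃ γs ∈ Γ, 0 ≤ γs ∧ (∀ γ ∈ Γ, f γ ≤ f γs) ∧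
      (∀ γ' ∈ Γ, (∀ γ ∈ Γ, f γ ≤ f γ') → γ' ≤ γs) := by
  obtain ⟨a, ha, rfl, hposDef⟩ : ∃ a, 0 ≤ a ∧ Γ = Set.Ici a ∧
      ∀ γ ∈ Set.Ici a, (Zᵀ * Z + γ • (1 : Matrix (Fin k) (Fin k) ℝ)).PosDef := by
    by_cases hZ : Z.rank = k
    · refine ⟨0, le_rfl, by rw [hΓ, if_pos hZ], fun γ hγ => ?_⟩
      exact posDef_transpose_mul_self_add_smul_one_of_injective Z
        (mulVec_injective_of_rank_eq_card_s10 (by simpa using hZ)) hγ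
    · exact ⟨γm, hγm.le, by rw [hΓ, if_neg hZ], fun γ hγ =>
        posDef_transpose_mul_self_add_smul_one Z (hγm.trans_le hγ)⟩
  have hf' : f = offDiagSqSum ∘ ridgeP Z := funext hf
  have hcont : ContinuousOn f (Set.Ici a) := fun γ hγ =>
    hf' ▸ (continuous_offDiagSqSum.continuousAt.comp
      (continuousAt_ridgeP Z (hposDef γ hγ).det_pos.ne'.isUnit)).continuousWithinAt
  have hlim : Tendsto f atTop (𝓝 0) := by
    simpa [hf'] using continuous_offDiagSqSum.continuousAt.tendsto.comp (tendsto_ridgeP_atTop Z)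
  obtain ⟨γ₀, hγ₀, hpos⟩ := hnd
  obtain ⟨γs, ⟨hγs, hmax⟩, hgreatest⟩ := exists_isGreatest_isMaxOn_Ici hcont hlim hγ₀ hpos
  exact ⟨γs, hγs, ha.trans hγs, hmax, fun γ' hγ' hmax' => hgreatest ⟨hγ', hmax'⟩⟩

/-- Let `Γ = [0, ∞)` if `rank(Z) = k` and `Γ = [γ₋, ∞)` otherwise. If for some `γ ∈ Γ`
the matrix `P^γ` is not diagonal (equivalently its off-diagonal squared mass is positive),
then `f(γ) = ∑_i ∑_{j ≠ i} (P^γ_{ij})²` attains its maximum on `Γ`, and the set of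
maximisers has a largest element `γ* ∈ [0, ∞)`. -/
theorem gammaStar_exists
    {n k : ℕ} (hn : 0 < n) (hk : 0 < k)
    (Z : Matrix (Fin n) (Fin k) ℝ) (hr : 0 < Z.rank)
    (γm : ℝ) (hγm : 0 < γm)
    (Γ : Set ℝ)
    (hΓ : Γ = if Z.rank = k then Set.Ici (0 : ℝ) else Set.Ici γm)
    (f : ℝ → ℝ)
    (hf : ∀ γ, f γ = ∑ i : Fin n, ∑ j ∈ Finset.univ.erase i, (ridgeP Z γ i j) ^ 2)
    (hnd : ∃ γ ∈ Γ, 0 < f γ) :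
    ∃ γs ∈ Γ, 0 ≤ γs ∧ (∀ γ ∈ Γ, f γ ≤ f γs) ∧
      (∀ γ' ∈ Γ, (∀ γ ∈ Γ, f γ ≤ f γ') → γ' ≤ γs) :=
  gammaStar_exists_general Z γm hγm Γ hΓ f hf hnd
end
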